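/- arXiv:1210.2070 — 7 statements merged into one kernel-verified Lean document; each statement's English description precedes it below -/
import Mathlib

section
/- If F(z) ∈ ℂ[[z]] is a k-Mahler function, i.e., there exist polynomials a_0(z),...,a_d(z) ∈ ℂ[z] with a_0(z)a_d(z) ≠ 0 and Σ_{j=0}^d a_j(z) F(z^{k^j}) = 0, then F(z) has positive radius of convergence. -/
open PowerSeries

/-- The substitution `z ↦ z^m` on formal power series: `(psSubst m F)(z) = F(z^m)`. -/
noncomputable def psSubst (m : ℕ) (F : PowerSeries ℂ) : PowerSeries ℂ :=
  PowerSeries.mk fun n => if m ∣ n then PowerSeries.coeff (n / m) F else 0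

/-- `F` is `k`-Mahler: there are polynomials `a 0, …, a d` with `a 0 * a d ≠ 0` and
`Σ_{j=0}^d a_j(z) F(z^{k^j}) = 0`. -/
def IsKMahler (k : ℕ) (F : PowerSeries ℂ) : Prop :=
  ∃ (d : ℕ) (a : ℕ → Polynomial ℂ), a 0 * a d ≠ 0 ∧
    ∑ j ∈ Finset.range (d + 1), (a j : PowerSeries ℂ) * psSubst (k ^ j) F = 0

/-!
Write `f n` for the coefficients of `F`, `h` for the order of vanishing of `a₀` at `0` and
`c = a₀[h] ≠ 0`. For `n > h` the coefficient of `z^(n+h)` in the Mahler equation expresses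
`c f n` through the `f m` with `m < n` only: the other terms of `a₀ F` involve `f (n + h - i)`
with `i > h`, and `F(z^{k^j})` for `j ≥ 1` involves `f m` with `k m ≤ n + h < 2 n`.
Hence `|f n| ≤ K max_{m<n} |f m|` for a constant `K`, so the `f n` grow at most geometrically.
-/

theorem PowerSeries.coeff_monomial_mul {R : Type*} [CommSemiring R] (i N : ℕ) (a : R)
    (G : R⟦X⟧) :
    coeff N (monomial i a * G) = if i ≤ N then a * coeff (N - i) G else 0 := by
  have hmon : monomial i a = C a * X ^ i := by
    rw [X_pow_eq, ← monomial_zero_eq_C_apply, monomial_mul_monomial, zero_add, mul_one]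
  rw [hmon, mul_assoc, coeff_C_mul, coeff_X_pow_mul', mul_ite, mul_zero]

theorem Polynomial.coeff_add_coe_mul_eq_add_erase {R : Type*} [CommSemiring R]
    (p : Polynomial R) (F : R⟦X⟧) (n i : ℕ) :
    PowerSeries.coeff (n + i) ((p : R⟦X⟧) * F) =
      p.coeff i * PowerSeries.coeff n F +
        PowerSeries.coeff (n + i) ((p.erase i : R⟦X⟧) * F) := by
  conv_lhs => rw [← p.monomial_add_erase i]
  rw [coe_add, coe_monomial, add_mul, map_add, PowerSeries.coeff_monomial_mul,
    if_pos (Nat.le_add_left i n), Nat.add_sub_cancel]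

namespace Polynomial

variable {R : Type*} [NormedCommRing R]

noncomputable def l1Norm (p : R[X]) : ℝ :=
  p.sum fun _ a => ‖a‖

theorem norm_coeff_coe_mul_le (p : R[X]) (G : R⟦X⟧) (N : ℕ) {B : ℝ} (hB : 0 ≤ B)
    (h : ∀ i ∈ p.support, i ≤ N → ‖PowerSeries.coeff (N - i) G‖ ≤ B) :
    ‖PowerSeries.coeff N ((p : R⟦X⟧) * G)‖ ≤ l1Norm p * B := by
  conv_lhs => rw [p.as_sum_support, ← coeToPowerSeries.ringHom_apply, map_sum, Finset.sum_mul,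
    map_sum]
  simp only [coeToPowerSeries.ringHom_apply, coe_monomial, PowerSeries.coeff_monomial_mul]
  rw [l1Norm, sum_def, Finset.sum_mul]
  refine (norm_sum_le _ _).trans (Finset.sum_le_sum fun i hi => ?_)
  split_ifs with hiN
  · exact (norm_mul_le _ _).trans (mul_le_mul_of_nonneg_left (h i hi hiN) (norm_nonneg _))
  · simpa using mul_nonneg (norm_nonneg _) hB

end Polynomial

@[simp]
theorem coeff_psSubst (m n : ℕ) (F : ℂ⟦X⟧) :
    coeff n (psSubst m F) = if m ∣ n then coeff (n / m) F else 0 :=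
  coeff_mk _ _

@[simp]
theorem psSubst_one (F : ℂ⟦X⟧) : psSubst 1 F = F := by
  ext n
  simp

theorem norm_coeff_psSubst_le {m N : ℕ} {F : ℂ⟦X⟧} {B : ℝ} (hB : 0 ≤ B)
    (h : ∀ i, m * i ≤ N → ‖coeff i F‖ ≤ B) {l : ℕ} (hl : l ≤ N) :
    ‖coeff l (psSubst m F)‖ ≤ B := by
  rw [coeff_psSubst]
  split_ifs with hdvd
  · exact h _ ((Nat.mul_div_cancel' hdvd).le.trans hl)
  · simpa using hB

theorem exists_le_mul_pow_of_le_mul_of_forall_lt_le {u : ℕ → ℝ} {K : ℝ} {n₀ : ℕ}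
    (h : ∀ n > n₀, ∀ B, (∀ m < n, u m ≤ B) → u n ≤ K * B) :
    ∃ M C : ℝ, 0 < C ∧ ∀ n, u n ≤ M * C ^ n := by
  set M := ∑ m ∈ Finset.range (n₀ + 1), |u m|
  set C := max 1 K
  have hM : 0 ≤ M := Finset.sum_nonneg fun m _ => abs_nonneg _
  have hC : 1 ≤ C := le_max_left 1 K
  refine ⟨M, C, one_pos.trans_le hC, fun n => ?_⟩
  induction n using Nat.strong_induction_on with
  | _ n ih =>
    obtain hn | hn := le_or_gt n n₀
    · calc u n ≤ |u n| := le_abs_self _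
        _ ≤ M := Finset.single_le_sum (fun m _ => abs_nonneg (u m))
          (Finset.mem_range.2 (Nat.lt_succ_of_le hn))
        _ ≤ M * C ^ n := le_mul_of_one_le_right hM (one_le_pow₀ hC)
    · obtain ⟨n, rfl⟩ : ∃ n', n = n' + 1 := Nat.exists_eq_succ_of_ne_zero (by omega)
      have hB : ∀ m < n + 1, u m ≤ M * C ^ n := fun m hm =>
        (ih m hm).trans (mul_le_mul_of_nonneg_left (pow_le_pow_right₀ hC (by omega)) hM)
      calc u (n + 1) ≤ K * (M * C ^ n) := h _ hn _ hB
        _ ≤ C * (M * C ^ n) := mul_le_mul_of_nonneg_right (le_max_right 1 K) (by positivity)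
        _ = M * C ^ (n + 1) := by ring

theorem exists_pos_forall_lt_summable_mul_pow {u : ℕ → ℝ} {M C : ℝ} (hC : 0 < C)
    (hu₀ : ∀ n, 0 ≤ u n) (hu : ∀ n, u n ≤ M * C ^ n) :
    ∃ r : ℝ, 0 < r ∧ ∀ x : ℝ, 0 ≤ x → x < r → Summable fun n => u n * x ^ n := by
  refine ⟨C⁻¹, inv_pos.2 hC, fun x hx₀ hx => ?_⟩
  have hCx : C * x < 1 := by simpa [hC.ne'] using mul_lt_mul_of_pos_left hx hC
  refine ((summable_geometric_of_lt_one (by positivity) hCx).mul_left M).of_nonneg_of_le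
    (fun n => mul_nonneg (hu₀ n) (pow_nonneg hx₀ n)) fun n => ?_
  calc u n * x ^ n ≤ M * C ^ n * x ^ n := mul_le_mul_of_nonneg_right (hu n) (pow_nonneg hx₀ n)
    _ = M * (C * x) ^ n := by rw [mul_pow, mul_assoc]

theorem IsKMahler.exists_norm_coeff_le_mul_of_forall_lt_le {k : ℕ} (hk : 2 ≤ k)
    {F : ℂ⟦X⟧} (hF : IsKMahler k F) :
    ∃ (K : ℝ) (n₀ : ℕ), ∀ n > n₀, ∀ B, (∀ m < n, ‖coeff m F‖ ≤ B) → ‖coeff n F‖ ≤ K * B := by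
  obtain ⟨d, a, ha, heq⟩ := hF
  set h := (a 0).natTrailingDegree
  set c := (a 0).coeff h
  have hc : c ≠ 0 := Polynomial.coeff_natTrailingDegree_ne_zero.2 (left_ne_zero_of_mul ha)
  set a₀' := (a 0).erase h
  refine ⟨(a₀'.l1Norm + ∑ j ∈ Finset.range d, (a (j + 1)).l1Norm) / ‖c‖, h,
    fun n hn B hB => ?_⟩
  have hB₀ : 0 ≤ B := (norm_nonneg _).trans (hB 0 (by omega))
  have hcoeff : c * coeff n F = -(coeff (n + h) ((a₀' : ℂ⟦X⟧) * F) +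
      ∑ j ∈ Finset.range d, coeff (n + h) ((a (j + 1) : ℂ⟦X⟧) * psSubst (k ^ (j + 1)) F)) := by
    have hsplit := congrArg (coeff (n + h)) heq
    rw [Finset.sum_range_succ', pow_zero, psSubst_one, map_add, map_sum, map_zero,
      Polynomial.coeff_add_coe_mul_eq_add_erase] at hsplit
    linear_combination hsplit
  have ha₀' : ‖coeff (n + h) ((a₀' : ℂ⟦X⟧) * F)‖ ≤ a₀'.l1Norm * B := by
    refine Polynomial.norm_coeff_coe_mul_le _ _ _ hB₀ fun i hi _ => hB _ ?_
    have hih : i ≠ h := fun hih => by simp [a₀', hih] at hi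
    have : h ≤ i := Polynomial.natTrailingDegree_le_of_ne_zero
      (by simpa [a₀', Polynomial.coeff_erase, hih] using hi)
    omega
  have haj : ∀ j ∈ Finset.range d, ‖coeff (n + h) ((a (j + 1) : ℂ⟦X⟧) * psSubst (k ^ (j + 1)) F)‖
      ≤ (a (j + 1)).l1Norm * B := by
    refine fun j _ => Polynomial.norm_coeff_coe_mul_le _ _ _ hB₀ fun i _ _ =>
      norm_coeff_psSubst_le hB₀ (fun m hm => hB m ?_) (Nat.sub_le _ _)
    have : 2 ≤ k ^ (j + 1) := hk.trans (Nat.le_self_pow (by omega) k)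
    nlinarith
  rw [div_mul_eq_mul_div, le_div_iff₀ (norm_pos_iff.2 hc), add_mul, Finset.sum_mul, mul_comm]
  calc ‖c‖ * ‖coeff n F‖ = ‖coeff (n + h) ((a₀' : ℂ⟦X⟧) * F) +
      ∑ j ∈ Finset.range d, coeff (n + h) ((a (j + 1) : ℂ⟦X⟧) * psSubst (k ^ (j + 1)) F)‖ := by
        rw [← norm_mul, hcoeff, norm_neg]
    _ ≤ _ := norm_add_le_of_le ha₀' ((norm_sum_le _ _).trans (Finset.sum_le_sum haj))

/-- A `k`-Mahler function has a positive radius of convergence. -/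
theorem kMahler_positive_radius (k : ℕ) (hk : 2 ≤ k) (F : PowerSeries ℂ)
    (hF : IsKMahler k F) :
    ∃ r : ℝ, 0 < r ∧ ∀ z : ℂ, ‖z‖ < r →
      Summable fun n : ℕ => ‖PowerSeries.coeff n F‖ * ‖z‖ ^ n := by
  obtain ⟨K, n₀, hrec⟩ := hF.exists_norm_coeff_le_mul_of_forall_lt_le hk
  obtain ⟨M, C, hC, hgrowth⟩ := exists_le_mul_pow_of_le_mul_of_forall_lt_le hrec
  obtain ⟨r, hr, hsum⟩ :=
    exists_pos_forall_lt_summable_mul_pow hC (fun n => norm_nonneg (coeff n F)) hgrowth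
  exact ⟨r, hr, fun z hz => hsum ‖z‖ (norm_nonneg z) hz⟩
end

section
/- Let k ≥ 2 and let F be a k-Mahler function that extends to a meromorphic function on the whole complex plane. Then F has only finitely many singularities (poles). -/
/-!
Let `P` be the set of points near which `f` is unbounded: it contains the poles and, `f` being
meromorphic, it is discrete. Solving the Mahler equation for `f (z ^ k ^ d)` shows that, outside a
disc `‖z‖ < C` containing the zeros of `a d`, `z ^ k ^ d ∈ P` forces `z ^ k ^ j ∈ P` for some
`j < d`. For `w ∈ P` let `e l` count the `k ^ l`-th roots of `w` lying in `P`. Each of them has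
`k ^ d` roots of order `k ^ d`, each of which is a root of order `k ^ j` of a point counted by
`e (l + d - j)`, so `k ^ d * e l ≤ ∑ j < d, k ^ j * e (l + d - j)`; as `∑ j < d, k ^ j < k ^ d`,
the counts increase at least every `d` levels. When `‖w‖` is huge this puts more points of `P` into
the disc of radius `C ^ k ^ d` than the finitely many it contains.
-/

open Filter Metric Polynomial Topology Asymptotics Finset

lemma exists_lt_shift_of_pow_mul_le_sum {k d l : ℕ} {e : ℕ → ℕ} (hk : 2 ≤ k)
    (hrec : k ^ d * e l ≤ ∑ j ∈ range d, k ^ j * e (l + d - j)) (hl : 1 ≤ e l) :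
    ∃ j, 0 < j ∧ j ≤ d ∧ e l < e (l + j) := by
  by_contra! h
  have hsum : ∑ j ∈ range d, k ^ j < k ^ d := Nat.geomSum_lt hk fun j hj => mem_range.1 hj
  have : k ^ d * e l < k ^ d * e l :=
    calc k ^ d * e l ≤ ∑ j ∈ range d, k ^ j * e (l + d - j) := hrec
      _ ≤ ∑ j ∈ range d, k ^ j * e l := sum_le_sum fun j hj => by
          have hj := mem_range.1 hj
          rw [show l + d - j = l + (d - j) by omega]
          exact Nat.mul_le_mul_left _ (h (d - j) (by omega) (by omega))
      _ = (∑ j ∈ range d, k ^ j) * e l := (sum_mul _ _ _).symm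
      _ < k ^ d * e l := Nat.mul_lt_mul_of_pos_right hsum hl
  exact lt_irrefl _ this

/-- Along a chain of strict increases by steps of length at most `d`, `d * e l - l` does not
decrease. -/
lemma exists_le_mul_add_of_forall_exists_lt {e : ℕ → ℕ} {d n : ℕ}
    (hstep : ∀ l, l + d ≤ n → 1 ≤ e l → ∃ j, 0 < j ∧ j ≤ d ∧ e l < e (l + j))
    (l : ℕ) (he : 1 ≤ e l) :
    ∃ l', n < l' + d ∧ d * e l + l' ≤ d * e l' + l := by
  by_cases hld : l + d ≤ n
  · obtain ⟨j, hj0, hjd, hlt⟩ := hstep l hld he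
    obtain ⟨l', hnl', hle⟩ := exists_le_mul_add_of_forall_exists_lt hstep (l + j) (by omega)
    refine ⟨l', hnl', ?_⟩
    have : d * (e l + 1) ≤ d * e (l + j) := Nat.mul_le_mul_left _ hlt
    rw [mul_add] at this
    omega
  · exact ⟨l, by omega, le_rfl⟩
termination_by n - l

lemma Polynomial.card_nthRootsFinset_le {R : Type*} [CommRing R] [IsDomain R] (n : ℕ) (a : R) :
    #(nthRootsFinset n a) ≤ n := by
  classical
  rw [nthRootsFinset_def]
  exact (Multiset.toFinset_card_le _).trans (card_nthRoots n a)

lemma Complex.card_nthRootsFinset {n : ℕ} (hn : n ≠ 0) {a : ℂ} (ha : a ≠ 0) :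
    #(nthRootsFinset n a) = n := by
  classical
  have hζ := Complex.isPrimitiveRoot_exp n hn
  rw [nthRootsFinset_def, Multiset.toFinset_card_of_nodup (hζ.nthRoots_nodup ha),
    hζ.card_nthRoots, if_pos (IsAlgClosed.exists_pow_nat_eq a (Nat.pos_of_ne_zero hn))]

lemma Polynomial.card_biUnion_nthRootsFinset_le {R : Type*} [CommRing R] [IsDomain R]
    [DecidableEq R] (S : Finset R) (n : ℕ) :
    #(S.biUnion fun a => nthRootsFinset n a) ≤ n * #S :=
  card_biUnion_le.trans <| (sum_le_card_nsmul _ _ _ fun a _ => card_nthRootsFinset_le n a).trans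
    (by rw [smul_eq_mul, mul_comm])

lemma Complex.card_biUnion_nthRootsFinset {n : ℕ} (hn : n ≠ 0) {S : Finset ℂ} (hS : 0 ∉ S) :
    #(S.biUnion fun a => nthRootsFinset n a) = n * #S := by
  rw [card_biUnion, sum_congr rfl fun a ha => card_nthRootsFinset hn (ne_of_mem_of_not_mem ha hS),
    sum_const, smul_eq_mul, mul_comm]
  intro a _ b _ hab
  refine disjoint_left.2 fun z hza hzb => hab ?_
  rw [mem_nthRootsFinset (Nat.pos_of_ne_zero hn)] at hza hzb
  exact hza.symm.trans hzb

open Classical in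
noncomputable def rootsIn (P : Set ℂ) (n : ℕ) (w : ℂ) : Finset ℂ :=
  {z ∈ nthRootsFinset n w | z ∈ P}

lemma mem_rootsIn {P : Set ℂ} {n : ℕ} (hn : n ≠ 0) {w z : ℂ} :
    z ∈ rootsIn P n w ↔ z ^ n = w ∧ z ∈ P := by
  classical
  rw [rootsIn, mem_filter, mem_nthRootsFinset (Nat.pos_of_ne_zero hn)]

lemma pow_mul_card_rootsIn_le_sum {P : Set ℂ} {k d l : ℕ} {w : ℂ} (hk : k ≠ 0) (hw : w ≠ 0)
    (hdesc : ∀ z : ℂ, z ^ k ^ (l + d) = w → z ^ k ^ d ∈ P → ∃ j < d, z ^ k ^ j ∈ P) :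
    k ^ d * #(rootsIn P (k ^ l) w) ≤ ∑ j ∈ range d, k ^ j * #(rootsIn P (k ^ (l + d - j)) w) := by
  classical
  have hkpow (i : ℕ) : k ^ i ≠ 0 := pow_ne_zero i hk
  have hzero : 0 ∉ rootsIn P (k ^ l) w := fun h0 =>
    hw (((mem_rootsIn (hkpow l)).1 h0).1.symm.trans (zero_pow (hkpow l)))
  have hcover : (rootsIn P (k ^ l) w).biUnion (fun p => nthRootsFinset (k ^ d) p) ⊆
      (range d).biUnion fun j =>
        (rootsIn P (k ^ (l + d - j)) w).biUnion fun q => nthRootsFinset (k ^ j) q := by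
    intro z hz
    obtain ⟨p, hp, hzp⟩ := mem_biUnion.1 hz
    rw [mem_nthRootsFinset (Nat.pos_of_ne_zero (hkpow d))] at hzp
    obtain ⟨hpw, hpP⟩ := (mem_rootsIn (hkpow l)).1 hp
    have hzw : z ^ k ^ (l + d) = w := by rw [← hpw, ← hzp, ← pow_mul, ← pow_add, add_comm]
    obtain ⟨j, hj, hjP⟩ := hdesc z hzw (hzp ▸ hpP)
    refine mem_biUnion.2 ⟨j, mem_range.2 hj, mem_biUnion.2 ⟨z ^ k ^ j, ?_, ?_⟩⟩
    · rw [mem_rootsIn (hkpow _), ← pow_mul, ← pow_add, Nat.add_sub_cancel' (by omega)]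
      exact ⟨hzw, hjP⟩
    · exact (mem_nthRootsFinset (Nat.pos_of_ne_zero (hkpow j)) _).2 rfl
  calc k ^ d * #(rootsIn P (k ^ l) w)
      = #((rootsIn P (k ^ l) w).biUnion fun p => nthRootsFinset (k ^ d) p) :=
        (Complex.card_biUnion_nthRootsFinset (hkpow d) hzero).symm
    _ ≤ #((range d).biUnion fun j =>
          (rootsIn P (k ^ (l + d - j)) w).biUnion fun q => nthRootsFinset (k ^ j) q) :=
        card_le_card hcover
    _ ≤ ∑ j ∈ range d, k ^ j * #(rootsIn P (k ^ (l + d - j)) w) :=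
        card_biUnion_le.trans (sum_le_sum fun j _ => card_biUnion_nthRootsFinset_le _ _)

lemma Monotone.exists_le_lt_succ {u : ℕ → ℝ} (hu : Monotone u) (htop : Tendsto u atTop atTop)
    {N : ℕ} {x : ℝ} (hx : u N ≤ x) : ∃ n, N ≤ n ∧ u n ≤ x ∧ x < u (n + 1) := by
  classical
  have hex : ∃ m, x < u m := (htop.eventually_gt_atTop x).exists
  have hN : N < Nat.find hex := by
    by_contra! h
    exact (Nat.find_spec hex).not_ge ((hu h).trans hx)
  refine ⟨Nat.find hex - 1, by omega, not_lt.1 (Nat.find_min hex (by omega)), ?_⟩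
  rw [Nat.sub_add_cancel (by omega)]
  exact Nat.find_spec hex

lemma exists_subset_closedBall_of_descent {P : Set ℂ} {k d : ℕ} {C : ℝ} (hk : 2 ≤ k)
    (hC : 1 < C) (hdesc : ∀ p ∈ P, ∀ z : ℂ, z ^ k ^ d = p → C ≤ ‖z‖ → ∃ j < d, z ^ k ^ j ∈ P)
    (hfin : (P ∩ closedBall 0 (C ^ k ^ d)).Finite) :
    ∃ R, P ⊆ closedBall 0 R := by
  set b := (P ∩ closedBall 0 (C ^ k ^ d)).ncard
  have hkpow (i : ℕ) : k ^ i ≠ 0 := pow_ne_zero i (by omega)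
  have hmono : Monotone fun n => C ^ k ^ n := fun m n hmn =>
    pow_le_pow_right₀ hC.le (Nat.pow_le_pow_right (by omega) hmn)
  have htop : Tendsto (fun n => C ^ k ^ n) atTop atTop :=
    (tendsto_pow_atTop_atTop_of_one_lt hC).comp
      (tendsto_pow_atTop_atTop_of_one_lt (by omega : 1 < k))
  refine ⟨C ^ k ^ (d * b), fun w hw => ?_⟩
  rw [mem_closedBall, dist_zero_right]
  by_contra! hwb
  obtain ⟨n, hbn, hn, hn1⟩ := hmono.exists_le_lt_succ htop hwb.le
  have hw0 : w ≠ 0 := norm_pos_iff.1 ((by positivity : (0:ℝ) < C ^ k ^ (d * b)).trans hwb)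
  set e : ℕ → ℕ := fun l => #(rootsIn P (k ^ l) w)
  have he0 : e 0 = 1 := card_eq_one.2 ⟨w, ext fun z => by
    rw [pow_zero, mem_rootsIn one_ne_zero, pow_one, mem_singleton]
    exact ⟨And.left, fun hz => ⟨hz, hz ▸ hw⟩⟩⟩
  have hstep (l : ℕ) (hl : l + d ≤ n) (he : 1 ≤ e l) : ∃ j, 0 < j ∧ j ≤ d ∧ e l < e (l + j) := by
    refine exists_lt_shift_of_pow_mul_le_sum hk (pow_mul_card_rootsIn_le_sum (by omega) hw0 ?_) he
    intro z hzw hzP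
    refine hdesc _ hzP z rfl (le_of_not_gt fun hz => hn.not_gt ?_)
    calc ‖w‖ = ‖z‖ ^ k ^ (l + d) := by rw [← hzw, norm_pow]
      _ < C ^ k ^ (l + d) := pow_lt_pow_left₀ hz (norm_nonneg z) (hkpow _)
      _ ≤ C ^ k ^ n := hmono hl
  obtain ⟨l, hnl, hle⟩ := exists_le_mul_add_of_forall_exists_lt hstep 0 he0.ge
  have hel : e l ≤ b := by
    show #(rootsIn P (k ^ l) w) ≤ b
    rw [← Set.ncard_coe_finset]
    refine Set.ncard_le_ncard (fun p hp => ?_) hfin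
    obtain ⟨hpw, hpP⟩ := (mem_rootsIn (hkpow l)).1 hp
    refine ⟨hpP, mem_closedBall_zero_iff.2 (le_of_not_gt fun hp => hn1.not_ge ?_)⟩
    calc C ^ k ^ (n + 1) ≤ C ^ k ^ (d + l) := hmono (by omega)
      _ = (C ^ k ^ d) ^ k ^ l := by rw [pow_add, pow_mul]
      _ ≤ ‖p‖ ^ k ^ l := pow_le_pow_left₀ (by positivity) hp.le _
      _ = ‖w‖ := by rw [← hpw, norm_pow]
  have : d * e l ≤ d * b := Nat.mul_le_mul_left d hel
  rw [he0] at hle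
  omega

lemma tendsto_pow_nhdsNE {m : ℕ} (hm : m ≠ 0) (x : ℂ) :
    Tendsto (· ^ m) (𝓝[≠] x) (𝓝[≠] (x ^ m)) := by
  refine (analyticAt_id.pow m).map_nhdsNE fun hconst => ?_
  obtain ⟨c, hc⟩ := eventuallyConst_iff_exists_eventuallyEq.1 hconst
  have hpow : (· ^ m) = fun _ : ℂ => c :=
    AnalyticOnNhd.eq_of_eventuallyEq (𝕜 := ℂ) (fun z _ => analyticAt_id.pow m)
      (fun _ _ => analyticAt_const) hc
  have h0 := congrFun hpow 0
  have h1 := congrFun hpow 1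
  simp only [zero_pow hm, one_pow] at h0 h1
  exact zero_ne_one (h0.trans h1.symm)

lemma nhdsNE_pow_le_map_pow {m : ℕ} (hm : m ≠ 0) (x : ℂ) :
    𝓝[≠] (x ^ m) ≤ map (· ^ m) (𝓝[≠] x) := by
  have : NeZero m := ⟨hm⟩
  calc 𝓝[≠] (x ^ m) ≤ map (· ^ m) (𝓝 x) ⊓ 𝓟 {x ^ m}ᶜ :=
        inf_le_inf_right _ ((Complex.isOpenQuotientMap_pow m).isOpenMap.nhds_le x)
    _ = map (· ^ m) (𝓝 x ⊓ 𝓟 ((· ^ m) ⁻¹' {x ^ m}ᶜ)) := map_inf_principal_preimage.symm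
    _ ≤ map (· ^ m) (𝓝[≠] x) :=
        map_mono (inf_le_inf_left _ (principal_mono.2 fun z hz hzx => hz (congrArg (· ^ m) hzx)))

lemma MeromorphicOn.eventually_nhdsNE_eq_zero {g : ℂ → ℂ} (hg : MeromorphicOn g Set.univ)
    {z₀ : ℂ} (h₀ : g =ᶠ[𝓝 z₀] 0) (x : ℂ) : ∀ᶠ z in 𝓝[≠] x, g z = 0 := by
  rw [← meromorphicOrderAt_eq_top_iff]
  by_contra hx
  exact hg.meromorphicOrderAt_ne_top_of_isPreconnected isPreconnected_univ trivial trivial hx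
    (meromorphicOrderAt_eq_top_iff.2 (h₀.filter_mono nhdsWithin_le_nhds))

lemma MeromorphicOn.finite_setOf_not_isBigO_one_inter {𝕜 E : Type*} [NontriviallyNormedField 𝕜]
    [NormedAddCommGroup E] [NormedSpace 𝕜 E] [CompleteSpace E] {f : 𝕜 → E}
    (hf : MeromorphicOn f Set.univ) {K : Set 𝕜} (hK : IsCompact K) :
    ({x | ¬ f =O[𝓝[≠] x] fun _ => (1 : ℝ)} ∩ K).Finite := by
  rw [Set.inter_comm, ← Set.sdiff_compl]
  refine hK.finite_sdiff_of_mem_codiscreteWithin (codiscreteWithin_mono (Set.subset_univ K) ?_)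
  exact (hf.eventually_codiscreteWithin_analyticAt f).mono fun x hx =>
    not_not.2 (hx.continuousAt.tendsto.isBigO_one ℝ |>.mono nhdsWithin_le_nhds)

section Mahler

variable {k d : ℕ} {a : ℕ → ℂ[X]} {f : ℂ → ℂ}

lemma eventually_nhdsNE_mahler_eq_zero (hmero : MeromorphicOn f Set.univ)
    (heq : ∃ r : ℝ, 0 < r ∧ ∀ z ∈ ball (0 : ℂ) r,
      ∑ j ∈ range (d + 1), (a j).eval z * f (z ^ k ^ j) = 0) (x : ℂ) :
    ∀ᶠ z in 𝓝[≠] x, ∑ j ∈ range (d + 1), (a j).eval z * f (z ^ k ^ j) = 0 := by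
  obtain ⟨r, hr, hball⟩ := heq
  refine MeromorphicOn.eventually_nhdsNE_eq_zero (fun z _ => ?_)
    (eventually_of_mem (ball_mem_nhds 0 hr) hball) x
  refine MeromorphicAt.fun_sum fun j _ =>
    (AnalyticOnNhd.eval_polynomial (𝕜 := ℂ) (a j) z trivial).meromorphicAt.mul ?_
  exact (hmero _ trivial).comp_analyticAt (analyticAt_id.pow _)

lemma isBigO_one_of_mahler (hk : k ≠ 0) {z₀ : ℂ} (had : (a d).eval z₀ ≠ 0)
    (hfe : ∀ᶠ z in 𝓝[≠] z₀, ∑ j ∈ range (d + 1), (a j).eval z * f (z ^ k ^ j) = 0)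
    (hbdd : ∀ j < d, f =O[𝓝[≠] (z₀ ^ k ^ j)] fun _ => (1 : ℝ)) :
    f =O[𝓝[≠] (z₀ ^ k ^ d)] fun _ => (1 : ℝ) := by
  have hkpow (i : ℕ) : k ^ i ≠ 0 := pow_ne_zero i hk
  have hsolve : (fun z => f (z ^ k ^ d)) =ᶠ[𝓝[≠] z₀]
      fun z => -((a d).eval z)⁻¹ * ∑ j ∈ range d, (a j).eval z * f (z ^ k ^ j) := by
    have hne : ∀ᶠ z in 𝓝[≠] z₀, (a d).eval z ≠ 0 :=
      ((a d).continuous.continuousAt.eventually_ne had).filter_mono nhdsWithin_le_nhds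
    filter_upwards [hfe, hne] with z hz hz'
    rw [sum_range_succ] at hz
    field_simp
    linear_combination hz
  have hcoef : (fun z => -((a d).eval z)⁻¹) =O[𝓝[≠] z₀] fun _ => (1 : ℝ) :=
    ((a d).continuous.continuousAt.inv₀ had).neg.tendsto.mono_left nhdsWithin_le_nhds
      |>.isBigO_one ℝ
  have hsum : (fun z => ∑ j ∈ range d, (a j).eval z * f (z ^ k ^ j)) =O[𝓝[≠] z₀]
      fun _ => (1 : ℝ) := by
    refine IsBigO.fun_sum fun j hj => ?_
    have hpoly : (fun z => (a j).eval z) =O[𝓝[≠] z₀] fun _ => (1 : ℝ) :=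
      (((a j).continuous.tendsto z₀).mono_left nhdsWithin_le_nhds).isBigO_one ℝ
    have hcomp := (hbdd j (mem_range.1 hj)).comp_tendsto (tendsto_pow_nhdsNE (hkpow j) z₀)
    exact (hpoly.mul hcomp).congr_right fun _ => mul_one 1
  have hcomp : (fun z => f (z ^ k ^ d)) =O[𝓝[≠] z₀] fun _ => (1 : ℝ) :=
    hsolve.trans_isBigO ((hcoef.mul hsum).congr_right fun _ => mul_one 1)
  exact (isBigO_map.2 hcomp).mono (nhdsNE_pow_le_map_pow (hkpow d) z₀)

end Mahler

lemma Polynomial.exists_one_lt_forall_le_norm_eval_ne_zero {p : ℂ[X]} (hp : p ≠ 0) :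
    ∃ C : ℝ, 1 < C ∧ ∀ z : ℂ, C ≤ ‖z‖ → p.eval z ≠ 0 := by
  obtain ⟨r, hr⟩ := (finite_setOfPred_isRoot hp).isBounded.subset_closedBall 0
  refine ⟨max 2 (r + 1), by simp, fun z hz hroot => ?_⟩
  have := mem_closedBall_zero_iff.1 (hr hroot)
  linarith [le_max_right 2 (r + 1)]

theorem kMahler_meromorphic_finitely_many_poles_general
    (k : ℕ) (hk : 2 ≤ k) (d : ℕ) (a : ℕ → Polynomial ℂ) (ha : a 0 * a d ≠ 0)
    (f : ℂ → ℂ)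
    (heq : ∃ r : ℝ, 0 < r ∧ ∀ z ∈ ball (0 : ℂ) r,
      ∑ j ∈ Finset.range (d + 1), (a j).eval z * f (z ^ k ^ j) = 0)
    (hmero : MeromorphicOn f Set.univ) :
    {x : ℂ | Tendsto (fun z => ‖f z‖) (nhdsWithin x {x}ᶜ) atTop}.Finite := by
  set P := {x : ℂ | ¬ f =O[𝓝[≠] x] fun _ => (1 : ℝ)}
  have hpoles : {x : ℂ | Tendsto (fun z => ‖f z‖) (𝓝[≠] x) atTop} ⊆ P :=
    fun x hx hbdd => not_isBoundedUnder_of_tendsto_atTop hx ((isBigO_one_iff ℝ).1 hbdd)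
  obtain ⟨C, hC, had⟩ := exists_one_lt_forall_le_norm_eval_ne_zero (right_ne_zero_of_mul ha)
  have hdesc (p : ℂ) (hp : p ∈ P) (z : ℂ) (hzp : z ^ k ^ d = p) (hz : C ≤ ‖z‖) :
      ∃ j < d, z ^ k ^ j ∈ P := by
    by_contra! hbdd
    exact hp (hzp ▸ isBigO_one_of_mahler (by omega) (had z hz)
      (eventually_nhdsNE_mahler_eq_zero hmero heq z) fun j hj => not_not.1 (hbdd j hj))
  obtain ⟨R, hR⟩ := exists_subset_closedBall_of_descent hk hC hdesc
    (hmero.finite_setOf_not_isBigO_one_inter (isCompact_closedBall _ _))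
  exact (hmero.finite_setOf_not_isBigO_one_inter (isCompact_closedBall 0 R)).subset
    fun x hx => ⟨hpoles hx, hR (hpoles hx)⟩

/-- A `k`-Mahler function which is meromorphic on all of ℂ has only finitely many
singularities (poles). Here `f : ℂ → ℂ` is analytic at `0`, satisfies the Mahler
functional equation `Σ_{j=0}^d a_j(z) f(z^{k^j}) = 0` on a neighbourhood of `0`,
and is meromorphic on all of ℂ; a pole is a point where `‖f‖` blows up. -/
theorem kMahler_meromorphic_finitely_many_poles
    (k : ℕ) (hk : 2 ≤ k) (d : ℕ) (a : ℕ → Polynomial ℂ) (ha : a 0 * a d ≠ 0)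
    (f : ℂ → ℂ) (hf0 : AnalyticAt ℂ f 0)
    (heq : ∃ r : ℝ, 0 < r ∧ ∀ z ∈ ball (0 : ℂ) r,
      ∑ j ∈ Finset.range (d + 1), (a j).eval z * f (z ^ k ^ j) = 0)
    (hmero : MeromorphicOn f Set.univ) :
    {x : ℂ | Tendsto (fun z => ‖f z‖) (nhdsWithin x {x}ᶜ) atTop}.Finite :=
  kMahler_meromorphic_finitely_many_poles_general k hk d a ha f heq hmero
end

section
/- Let k ≥ 2 be an integer and let F(z) ∈ ℂ[[z]] be a k-Mahler function. If F extends to an entire function on ℂ, then F is a polynomial. -/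
open Metric Polynomial Filter Topology Finset Asymptotics
open scoped Nat

/-!
Let `M(t) = max_{‖w‖ ≤ t} ‖f w‖`. By the identity theorem the Mahler equation holds on all of `ℂ`.
Writing `w = z ^ k ^ d`, it expresses `f w` through the values `f (z ^ k ^ j)`, `j < d`, with
coefficients `a j z / a d z` of polynomial size, whence `M(t ^ k) ≤ K (t ^ k) ^ N M(t)` for large
`t`. Iterating along `t = T ^ k ^ n` shows that `M` grows at most polynomially along a sequence
of radii tending to infinity, and Cauchy's estimates then kill all but finitely many Taylor
coefficients of `f`.
-/

theorem Polynomial.exists_forall_sum_norm_eval_le {𝕜 : Type*} [NormedField 𝕜] {q : 𝕜[X]}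
    (hq : q ≠ 0) {a : ℕ → 𝕜[X]} {s : Finset ℕ} {N : ℕ} (hN : ∀ j ∈ s, (a j).natDegree ≤ N) :
    ∃ C r : ℝ, ∀ z : 𝕜, r ≤ ‖z‖ →
      q.eval z ≠ 0 ∧ ∑ j ∈ s, ‖(a j).eval z‖ ≤ C * ‖q.eval z‖ * ‖z‖ ^ N := by
  have hdeg : ∀ j ∈ s, (a j).degree ≤ (q * X ^ N).degree := fun j hj => by
    rw [degree_mul, degree_X_pow]
    exact (degree_le_of_natDegree_le (hN j hj)).trans
      (le_add_of_nonneg_left (zero_le_degree_iff.2 hq))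
  obtain ⟨C, hC⟩ :=
    (IsBigO.sum fun j hj => (isBigO_cobounded_of_degree_le (hdeg j hj)).norm_left).bound
  obtain ⟨r, -, hr⟩ := hasBasis_cobounded_norm.eventually_iff.1
    (hC.and (finite_setOfPred_isRoot hq).isBounded)
  refine ⟨C, r, fun z hz => ?_⟩
  obtain ⟨hzC, hzq⟩ := hr hz
  refine ⟨hzq, ?_⟩
  have hsum : 0 ≤ ∑ j ∈ s, ‖(a j).eval z‖ := sum_nonneg fun j _ => norm_nonneg _
  simpa [Finset.sum_apply, mul_assoc, abs_of_nonneg hsum] using hzC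

theorem norm_le_of_sum_range_mul_eq_zero {𝕜 : Type*} [NormedField 𝕜] {d : ℕ} {b y : ℕ → 𝕜}
    (h : ∑ j ∈ range (d + 1), b j * y j = 0) (hb : b d ≠ 0) {C X : ℝ}
    (hC : ∑ j ∈ range d, ‖b j‖ ≤ C * ‖b d‖) (hy : ∀ j < d, ‖y j‖ ≤ X) (hX : 0 ≤ X) :
    ‖y d‖ ≤ C * X := by
  have hyd : b d * y d = -∑ j ∈ range d, b j * y j := by
    rw [sum_range_succ] at h
    linear_combination h
  refine le_of_mul_le_mul_left ?_ (norm_pos_iff.2 hb)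
  calc ‖b d‖ * ‖y d‖ = ‖∑ j ∈ range d, b j * y j‖ := by rw [← norm_mul, hyd, norm_neg]
    _ ≤ ∑ j ∈ range d, ‖b j‖ * X := (norm_sum_le _ _).trans <| sum_le_sum fun j hj => by
        rw [norm_mul]
        exact mul_le_mul_of_nonneg_left (hy j (mem_range.1 hj)) (norm_nonneg _)
    _ = (∑ j ∈ range d, ‖b j‖) * X := (sum_mul ..).symm
    _ ≤ C * ‖b d‖ * X := mul_le_mul_of_nonneg_right hC hX
    _ = ‖b d‖ * (C * X) := by ring

theorem exists_norm_le_pow_mul_of_mahler {k d : ℕ} {a : ℕ → ℂ[X]} {f : ℂ → ℂ} (hk : 0 < k)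
    (had : a d ≠ 0) (hfe : ∀ z, ∑ j ∈ range (d + 1), (a j).eval z * f (z ^ k ^ j) = 0) :
    ∃ (K R₀ : ℝ) (N : ℕ), ∀ t, R₀ ≤ t → ∀ X, (∀ w : ℂ, ‖w‖ ≤ t → ‖f w‖ ≤ X) →
      ∀ w : ℂ, ‖w‖ ≤ t ^ k → ‖f w‖ ≤ K * (t ^ k) ^ N * X := by
  obtain ⟨N, hN⟩ : ∃ N, ∀ j ∈ range d, (a j).natDegree ≤ N :=
    ⟨_, fun j hj => le_sup (f := fun j => (a j).natDegree) hj⟩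
  obtain ⟨C, r, hr⟩ := exists_forall_sum_norm_eval_le had hN
  set ρ := max r 1
  refine ⟨max C 1, ρ ^ k ^ d, N, fun t ht X hX w hw => ?_⟩
  have ht1 : 1 ≤ t := (one_le_pow₀ (le_max_right _ _)).trans ht
  have hX0 : 0 ≤ X := (norm_nonneg _).trans (hX 0 (by simpa using zero_le_one.trans ht1))
  rcases le_or_gt ‖w‖ (ρ ^ k ^ d) with hw₀ | hw₀
  · calc ‖f w‖ ≤ X := hX w (hw₀.trans ht)
      _ ≤ max C 1 * (t ^ k) ^ N * X := le_mul_of_one_le_left hX0 <|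
          one_le_mul_of_one_le_of_one_le (le_max_right _ _) (one_le_pow₀ (one_le_pow₀ ht1))
  obtain ⟨z, rfl⟩ := IsAlgClosed.exists_pow_nat_eq w (pow_pos hk d)
  rw [norm_pow] at hw hw₀
  have hz : ρ ≤ ‖z‖ := le_of_pow_le_pow_left₀ (pow_ne_zero _ hk.ne') (norm_nonneg _) hw₀.le
  have hz1 : 1 ≤ ‖z‖ := (le_max_right _ _).trans hz
  obtain ⟨hzd, hzC⟩ := hr z ((le_max_left _ _).trans hz)
  have hpow : ∀ j < d, ‖z ^ k ^ j‖ ≤ t := fun j hj => by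
    refine le_of_pow_le_pow_left₀ hk.ne' (by linarith) ?_
    rw [norm_pow, ← pow_mul, ← pow_succ]
    exact (pow_le_pow_right₀ hz1 (Nat.pow_le_pow_right hk hj)).trans hw
  have hzt : ‖z‖ ≤ t ^ k := (le_self_pow₀ hz1 (pow_ne_zero _ hk.ne')).trans hw
  calc ‖f (z ^ k ^ d)‖ ≤ C * ‖z‖ ^ N * X :=
        norm_le_of_sum_range_mul_eq_zero (hfe z) hzd (by linarith)
          (fun j hj => hX _ (hpow j hj)) hX0
    _ ≤ max C 1 * (t ^ k) ^ N * X := by gcongr; exact le_max_left _ _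

theorem exists_norm_le_pow_of_norm_le_pow_mul {E F : Type*} [NormedAddCommGroup E] [ProperSpace E]
    [NormedAddCommGroup F] {f : E → F} (hf : Continuous f) {k N : ℕ} (hk : 2 ≤ k) {K R₀ : ℝ}
    (hstep : ∀ t, R₀ ≤ t → ∀ X, (∀ w, ‖w‖ ≤ t → ‖f w‖ ≤ X) →
      ∀ w, ‖w‖ ≤ t ^ k → ‖f w‖ ≤ K * (t ^ k) ^ N * X) :
    ∃ B T : ℝ, 1 < T ∧ ∀ n : ℕ, ∀ w, ‖w‖ ≤ T ^ k ^ n → ‖f w‖ ≤ B * (T ^ k ^ n) ^ (2 * N + 1) := by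
  set T := max (max R₀ K) 2
  have hT : 2 ≤ T := le_max_right _ _
  obtain ⟨B, hB⟩ := (isCompact_closedBall (0 : E) T).exists_bound_of_continuousOn hf.continuousOn
  have hB0 : 0 ≤ B := (norm_nonneg _).trans (hB 0 (mem_closedBall_self (by linarith)))
  refine ⟨B, T, by linarith, fun n => ?_⟩
  induction n with
  | zero =>
    intro w hw
    rw [pow_zero, pow_one] at hw ⊢
    exact (hB w (by simpa using hw)).trans
      (le_mul_of_one_le_right hB0 (one_le_pow₀ (by linarith)))
  | succ n ih =>
    set s := T ^ k ^ n
    have hTs : T ≤ s := le_self_pow₀ (by linarith) (pow_ne_zero _ (by omega))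
    have hKs : K ≤ s := ((le_max_right _ _).trans (le_max_left _ _)).trans hTs
    have hs1 : 1 ≤ s := by linarith
    have hexp : k * N + (2 * N + 1) + 1 ≤ k * (2 * N + 1) := by nlinarith
    have hsk : T ^ k ^ (n + 1) = s ^ k := by rw [pow_succ, pow_mul]
    intro w hw
    rw [hsk] at hw ⊢
    calc ‖f w‖ ≤ K * (s ^ k) ^ N * (B * s ^ (2 * N + 1)) :=
          hstep s (((le_max_left _ _).trans (le_max_left _ _)).trans hTs) _ ih w hw
      _ ≤ s * (s ^ k) ^ N * (B * s ^ (2 * N + 1)) := by gcongr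
      _ = B * s ^ (k * N + (2 * N + 1) + 1) := by ring
      _ ≤ B * s ^ (k * (2 * N + 1)) := by gcongr
      _ = B * (s ^ k) ^ (2 * N + 1) := by rw [pow_mul]

theorem Differentiable.exists_polynomial_of_norm_le_pow {ι : Type*} {l : Filter ι} [l.NeBot]
    {f : ℂ → ℂ} (hf : Differentiable ℂ f) {R : ι → ℝ} (hR : Tendsto R l atTop) {B : ℝ} {M : ℕ}
    (hbound : ∀ i, ∀ z ∈ sphere (0 : ℂ) (R i), ‖f z‖ ≤ B * R i ^ M) :
    ∃ P : ℂ[X], ∀ z, f z = P.eval z := by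
  have hderiv : ∀ n, M < n → iteratedDeriv n f 0 = 0 := fun n hn => by
    have hle : ∀ᶠ i in l, ‖iteratedDeriv n f 0‖ ≤ n ! * B * (R i ^ M / R i ^ n) := by
      filter_upwards [hR.eventually_gt_atTop 0] with i hi
      calc ‖iteratedDeriv n f 0‖ ≤ n ! * (B * R i ^ M) / R i ^ n :=
            Complex.norm_iteratedDeriv_le_of_forall_mem_sphere_norm_le n hi hf.diffContOnCl
              (hbound i)
        _ = n ! * B * (R i ^ M / R i ^ n) := by ring
    have hlim : Tendsto (fun i => n ! * B * (R i ^ M / R i ^ n)) l (𝓝 0) := by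
      simpa using ((tendsto_pow_div_pow_atTop_zero hn).comp hR).const_mul ((n ! : ℝ) * B)
    exact norm_le_zero_iff.1 (ge_of_tendsto hlim hle)
  refine ⟨∑ n ∈ range (M + 1), C ((n ! : ℂ)⁻¹ * iteratedDeriv n f 0) * X ^ n, fun z => ?_⟩
  rw [← Complex.taylorSeries_eq_of_entire' 0 z hf, tsum_eq_sum (s := range (M + 1)) fun n hn => by
    rw [hderiv n (by simpa using hn)]; simp]
  simp [eval_finsetSum]

/-- An entire `k`-Mahler function is a polynomial. Here `f : ℂ → ℂ` is entire and
satisfies the Mahler functional equation `Σ_{j=0}^d a_j(z) f(z^{k^j}) = 0`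
on a neighbourhood of `0` (equivalently, as formal power series). -/
theorem kMahler_entire_is_polynomial
    (k : ℕ) (hk : 2 ≤ k) (d : ℕ) (a : ℕ → Polynomial ℂ) (ha : a 0 * a d ≠ 0)
    (f : ℂ → ℂ) (hf : Differentiable ℂ f)
    (heq : ∃ r : ℝ, 0 < r ∧ ∀ z ∈ ball (0 : ℂ) r,
      ∑ j ∈ Finset.range (d + 1), (a j).eval z * f (z ^ k ^ j) = 0) :
    ∃ P : Polynomial ℂ, ∀ z : ℂ, f z = P.eval z := by
  obtain ⟨r, hr, hball⟩ := heq
  have hfe : ∀ z, ∑ j ∈ range (d + 1), (a j).eval z * f (z ^ k ^ j) = 0 := by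
    have hG : Differentiable ℂ fun z => ∑ j ∈ range (d + 1), (a j).eval z * f (z ^ k ^ j) := by
      fun_prop
    exact congrFun ((Complex.analyticOnNhd_univ_iff_differentiable.2 hG).eq_of_eventuallyEq
      analyticOnNhd_const (eventuallyEq_of_mem (ball_mem_nhds 0 hr) hball))
  obtain ⟨K, R₀, N, hstep⟩ :=
    exists_norm_le_pow_mul_of_mahler (by omega) (right_ne_zero_of_mul ha) hfe
  obtain ⟨B, T, hT, hbound⟩ := exists_norm_le_pow_of_norm_le_pow_mul hf.continuous hk hstep
  exact hf.exists_polynomial_of_norm_le_pow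
    ((tendsto_pow_atTop_atTop_of_one_lt hT).comp (tendsto_pow_atTop_atTop_of_one_lt (by omega)))
    fun n z hz => hbound n z (mem_sphere_zero_iff_norm.1 hz).le
end

section
/- Let k ≥ 2 and let F(z) ∈ ℂ[[z]] be a k-Mahler function. If F extends to a meromorphic function on all of ℂ with only finitely many poles, then F is a rational function. -/
/-!
Multiplying `f` by a polynomial `Q` that vanishes to the right order at the finitely many poles
gives an entire function `G = Q f`, and `G` satisfies a Mahler equation whose coefficients
`a j (z) * ∏ i ≠ j, Q (z ^ k ^ i)` are again polynomials. Solving that equation for `G (z ^ k ^ d)`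
bounds `G` on the disc of radius `ρ ^ k` by a power of `ρ` times its bound on the disc of radius
`ρ`; iterating from a fixed disc shows that `G` grows polynomially, so `G` is a polynomial by
Cauchy's estimates.
-/

open Filter Metric Polynomial Finset Bornology Topology Nat

theorem Polynomial.eventually_norm_eval_le_norm_pow_mul {𝕜 : Type*} [NormedField 𝕜]
    {p q : 𝕜[X]} (hq : q ≠ 0) {D : ℕ} (hD : p.natDegree < D) :
    ∀ᶠ z in cobounded 𝕜, ‖p.eval z‖ ≤ ‖z‖ ^ D * ‖q.eval z‖ := by
  have hdeg : p.degree < (X ^ D * q).degree := by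
    rw [degree_mul, degree_X_pow]
    exact (degree_le_natDegree.trans_lt (WithBot.coe_lt_coe.2 hD)).trans_le
      (le_add_of_nonneg_right (zero_le_degree_iff.2 hq))
  filter_upwards [(isLittleO_cobounded_of_degree_lt hdeg).bound one_pos] with z hz
  simpa using hz

section Liouville

variable {G : ℂ → ℂ} {C : ℝ} {M : ℕ}

theorem Differentiable.iteratedDeriv_eq_zero_of_norm_le (hG : Differentiable ℂ G)
    (hGC : ∀ w, ‖G w‖ ≤ C * max 1 ‖w‖ ^ M) {n : ℕ} (hn : M < n) :
    iteratedDeriv n G 0 = 0 := by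
  have hC : 0 ≤ C := by simpa using (norm_nonneg _).trans (hGC 0)
  have hbound : ∀ R : ℕ, 1 ≤ R → ‖iteratedDeriv n G 0‖ ≤ n ! * C / R := by
    intro R hR
    have hR1 : (1 : ℝ) ≤ R := by exact_mod_cast hR
    have hsphere : ∀ w ∈ sphere (0 : ℂ) R, ‖G w‖ ≤ C * R ^ M := fun w hw ↦ by
      simpa [mem_sphere_zero_iff_norm.1 hw, max_eq_right hR1] using hGC w
    calc ‖iteratedDeriv n G 0‖ ≤ n ! * (C * R ^ M) / R ^ n :=
          Complex.norm_iteratedDeriv_le_of_forall_mem_sphere_norm_le n (by positivity)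
            hG.diffContOnCl hsphere
      _ ≤ n ! * C / R := by
          rw [div_le_div_iff₀ (by positivity) (by positivity)]
          calc n ! * (C * R ^ M) * R = n ! * C * R ^ (M + 1) := by ring
            _ ≤ n ! * C * R ^ n := by gcongr; exact hn
  refine norm_le_zero_iff.1 (ge_of_tendsto (tendsto_const_div_atTop_nhds_zero_nat (n ! * C)) ?_)
  filter_upwards [eventually_ge_atTop 1] using hbound

theorem Differentiable.exists_polynomial_of_norm_le (hG : Differentiable ℂ G)
    (hGC : ∀ w, ‖G w‖ ≤ C * max 1 ‖w‖ ^ M) : ∃ p : ℂ[X], ∀ w, G w = p.eval w := by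
  refine ⟨∑ n ∈ range (M + 1), Polynomial.C ((n ! : ℂ)⁻¹ * iteratedDeriv n G 0) * X ^ n,
    fun w ↦ ?_⟩
  rw [(Complex.hasSum_taylorSeries_of_entire hG 0 w).unique
    (hasSum_sum_of_ne_finset_zero (s := range (M + 1)) fun n hn ↦ ?_), eval_finsetSum]
  · refine sum_congr rfl fun n _ ↦ ?_
    simp only [sub_zero, smul_eq_mul, eval_mul, eval_C, eval_pow, eval_X]
    ring
  · simp [hG.iteratedDeriv_eq_zero_of_norm_le hGC (by simpa using hn)]

end Liouville

section MahlerGrowth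

variable {E : Type*} [NormedAddCommGroup E] {G : ℂ → E} {k d D : ℕ}

theorem norm_le_of_mahler_bound_step (hk : 2 ≤ k) {R B C : ℝ} (hR : 2 ≤ R) (hB : 0 ≤ B)
    (h : ∀ z : ℂ, R ≤ ‖z‖ → ‖G (z ^ k ^ d)‖ ≤ ‖z‖ ^ D * ∑ j ∈ range d, ‖G (z ^ k ^ j)‖)
    (hGB : ∀ u : ℂ, ‖u‖ ≤ B → ‖G u‖ ≤ C * max 1 ‖u‖ ^ (D + d))
    {w : ℂ} (hwR : R ^ k ^ d ≤ ‖w‖) (hwB : ‖w‖ ≤ B ^ k) :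
    ‖G w‖ ≤ C * ‖w‖ ^ (D + d) := by
  have hkd : k ^ d ≠ 0 := pow_ne_zero _ (by omega)
  obtain ⟨z, rfl⟩ := IsAlgClosed.exists_pow_nat_eq w (Nat.pos_of_ne_zero hkd)
  set s := ‖z‖
  rw [norm_pow] at hwR hwB ⊢
  have hs : R ≤ s := le_of_pow_le_pow_left₀ hkd (norm_nonneg z) hwR
  have hs1 : 1 ≤ s := by linarith
  have hC : 0 ≤ C := by simpa using (norm_nonneg _).trans (hGB 0 (by simpa using hB))
  -- Since `‖z ^ k ^ j‖ * ‖z‖ ≤ ‖w‖` for `j < d`, the spare factor `‖z‖ ^ (D + d)` pays for the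
  -- coefficient `‖z‖ ^ D` and for the `d` summands.
  have hterm : ∀ j ∈ range d, ‖G (z ^ k ^ j)‖ * s ^ (D + d) ≤ C * (s ^ k ^ d) ^ (D + d) := by
    intro j hj
    have hjd : s ^ (k ^ j * k) ≤ s ^ k ^ d := pow_le_pow_right₀ hs1
      (by rw [← pow_succ]; exact Nat.pow_le_pow_right (by omega) (mem_range.1 hj))
    have hu1 : 1 ≤ s ^ k ^ j := one_le_pow₀ hs1
    have huB : s ^ k ^ j ≤ B := le_of_pow_le_pow_left₀ (n := k) (by omega) hB <| by
      rw [← pow_mul]; exact hjd.trans hwB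
    have hus : s ^ k ^ j * s ≤ s ^ k ^ d := by
      rw [← pow_succ]
      refine le_trans (pow_le_pow_right₀ hs1 ?_) hjd
      nlinarith [Nat.one_le_pow j k (by omega)]
    calc ‖G (z ^ k ^ j)‖ * s ^ (D + d) ≤ C * (s ^ k ^ j) ^ (D + d) * s ^ (D + d) := by
          gcongr
          have := hGB _ (by rwa [norm_pow])
          rwa [norm_pow, max_eq_right hu1] at this
      _ = C * (s ^ k ^ j * s) ^ (D + d) := by ring
      _ ≤ C * (s ^ k ^ d) ^ (D + d) := by gcongr
  have hd : (d : ℝ) ≤ s ^ d :=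
    calc (d : ℝ) ≤ 2 ^ d := by exact_mod_cast (Nat.lt_two_pow_self).le
      _ ≤ s ^ d := pow_le_pow_left₀ (by norm_num) (by linarith) d
  refine le_of_mul_le_mul_right ?_ (by positivity : 0 < s ^ (D + d))
  calc ‖G (z ^ k ^ d)‖ * s ^ (D + d)
      ≤ s ^ D * ∑ j ∈ range d, ‖G (z ^ k ^ j)‖ * s ^ (D + d) := by
        rw [← sum_mul, ← mul_assoc]
        gcongr
        exact h z (by linarith)
    _ ≤ s ^ D * (d * (C * (s ^ k ^ d) ^ (D + d))) := by
        gcongr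
        simpa using sum_le_card_nsmul _ _ _ hterm
    _ ≤ s ^ D * (s ^ d * (C * (s ^ k ^ d) ^ (D + d))) := by gcongr
    _ = C * (s ^ k ^ d) ^ (D + d) * s ^ (D + d) := by ring

theorem exists_norm_le_of_mahler_bound (hG : Continuous G) (hk : 2 ≤ k)
    (h : ∀ᶠ z in cobounded ℂ, ‖G (z ^ k ^ d)‖ ≤ ‖z‖ ^ D * ∑ j ∈ range d, ‖G (z ^ k ^ j)‖) :
    ∃ C : ℝ, ∃ M : ℕ, ∀ w, ‖G w‖ ≤ C * max 1 ‖w‖ ^ M := by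
  obtain ⟨R, hR2, hR⟩ : ∃ R : ℝ, 2 ≤ R ∧ ∀ z : ℂ, R ≤ ‖z‖ →
      ‖G (z ^ k ^ d)‖ ≤ ‖z‖ ^ D * ∑ j ∈ range d, ‖G (z ^ k ^ j)‖ := by
    rw [← comap_norm_atTop, eventually_comap, eventually_atTop] at h
    obtain ⟨R, hR⟩ := h
    exact ⟨max R 2, le_max_right _ _, fun z hz ↦ hR _ (le_of_max_le_left hz) z rfl⟩
  set ρ := R ^ k ^ d
  have hρ : 2 ≤ ρ := hR2.trans (le_self_pow₀ (by linarith) (pow_ne_zero _ (by omega)))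
  obtain ⟨C, hC⟩ := (isCompact_closedBall (0 : ℂ) ρ).exists_bound_of_continuousOn hG.continuousOn
  have hbound : ∀ n : ℕ, ∀ w : ℂ, ‖w‖ ≤ ρ ^ k ^ n → ‖G w‖ ≤ max C 0 * max 1 ‖w‖ ^ (D + d) := by
    intro n
    induction n with
    | zero =>
      intro w hw
      calc ‖G w‖ ≤ max C 0 * 1 := by simpa using Or.inl (hC w (by simpa using hw))
        _ ≤ max C 0 * max 1 ‖w‖ ^ (D + d) := by gcongr; exact one_le_pow₀ (le_max_left _ _)
    | succ n ih =>
      intro w hw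
      rcases le_or_gt ‖w‖ (ρ ^ k ^ n) with hwn | hwn
      · exact ih w hwn
      have hρn : ρ ≤ ρ ^ k ^ n := le_self_pow₀ (by linarith) (pow_ne_zero _ (by omega))
      rw [max_eq_right (show (1 : ℝ) ≤ ‖w‖ by linarith)]
      exact norm_le_of_mahler_bound_step hk hR2 (by linarith) hR ih (hρn.trans hwn.le)
        (by rwa [pow_succ, pow_mul] at hw)
  refine ⟨max C 0, D + d, fun w ↦ ?_⟩
  obtain ⟨n, hn⟩ := pow_unbounded_of_one_lt ‖w‖ (by linarith : 1 < ρ)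
  exact hbound n w (hn.le.trans (pow_le_pow_right₀ (by linarith) (Nat.lt_pow_self hk).le))

end MahlerGrowth

section MahlerSum

def mahlerSum {R : Type*} [CommSemiring R] (k d : ℕ) (b : ℕ → R[X]) (G : R → R)
    (z : R) : R :=
  ∑ j ∈ range (d + 1), (b j).eval z * G (z ^ k ^ j)

theorem mahlerSum_polynomial_mul {R : Type*} [CommSemiring R] (k d : ℕ) (a : ℕ → R[X]) (Q : R[X])
    (f : R → R) (z : R) :
    mahlerSum k d (fun j ↦ a j * ∏ i ∈ (range (d + 1)).erase j, expand R (k ^ i) Q)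
        (fun w ↦ Q.eval w * f w) z =
      (∏ i ∈ range (d + 1), Q.eval (z ^ k ^ i)) * mahlerSum k d a f z := by
  simp only [mahlerSum, mul_sum, eval_mul, eval_prod, expand_eval]
  refine sum_congr rfl fun j hj ↦ ?_
  rw [← mul_prod_erase _ _ hj]
  ring

theorem eventuallyEq_zero_mahlerSum_polynomial_mul {𝕜 : Type*} [NontriviallyNormedField 𝕜]
    [CompleteSpace 𝕜] {f G : 𝕜 → 𝕜} {Q : 𝕜[X]} {k d : ℕ} {a : ℕ → 𝕜[X]} (hk : k ≠ 0)
    (hf0 : AnalyticAt 𝕜 f 0) (hGf : ∀ z, AnalyticAt 𝕜 f z → G z = Q.eval z * f z)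
    (h : mahlerSum k d a f =ᶠ[𝓝 0] 0) :
    mahlerSum k d (fun j ↦ a j * ∏ i ∈ (range (d + 1)).erase j, expand 𝕜 (k ^ i) Q) G
      =ᶠ[𝓝 0] 0 := by
  have hfan : ∀ᶠ z in 𝓝 0, ∀ j ∈ range (d + 1), AnalyticAt 𝕜 f (z ^ k ^ j) :=
    (eventually_all_finset _).2 fun j _ ↦ ((continuous_pow _).tendsto' 0 0
      (zero_pow (pow_ne_zero _ hk))).eventually hf0.eventually_analyticAt
  filter_upwards [h, hfan] with z hz hfz
  calc _ = mahlerSum k d (fun j ↦ a j * ∏ i ∈ (range (d + 1)).erase j, expand 𝕜 (k ^ i) Q)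
        (fun w ↦ Q.eval w * f w) z := sum_congr rfl fun j hj ↦ by rw [hGf _ (hfz j hj)]
    _ = 0 := by rw [mahlerSum_polynomial_mul, hz, Pi.zero_apply, mul_zero]

theorem differentiable_mahlerSum {𝕜 : Type*} [NontriviallyNormedField 𝕜] {G : 𝕜 → 𝕜}
    (hG : Differentiable 𝕜 G) (k d : ℕ) (b : ℕ → 𝕜[X]) : Differentiable 𝕜 (mahlerSum k d b G) := by
  unfold mahlerSum
  fun_prop

theorem Differentiable.exists_polynomial_of_mahlerSum_eq_zero {G : ℂ → ℂ} {k d : ℕ}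
    (hG : Differentiable ℂ G) (hk : 2 ≤ k) {b : ℕ → ℂ[X]} (hb : b d ≠ 0)
    (h : ∀ z, mahlerSum k d b G z = 0) : ∃ p : ℂ[X], ∀ w, G w = p.eval w := by
  set D := (range d).sup (fun j ↦ (b j).natDegree) + 1
  have hcoeff : ∀ᶠ z in cobounded ℂ, ∀ j ∈ range d, ‖(b j).eval z‖ ≤ ‖z‖ ^ D * ‖(b d).eval z‖ :=
    (eventually_all_finset _).2 fun j hj ↦ eventually_norm_eval_le_norm_pow_mul hb
      (Nat.lt_succ_of_le (le_sup (f := fun j ↦ (b j).natDegree) hj))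
  have hbd : ∀ᶠ z in cobounded ℂ, (b d).eval z ≠ 0 := by
    filter_upwards [eventually_norm_eval_le_norm_pow_mul (p := 1) hb (D := 1) (by simp)]
      with z hz h0
    norm_num [h0] at hz
  obtain ⟨C, M, hCM⟩ := exists_norm_le_of_mahler_bound (D := D) hG.continuous hk <| by
    filter_upwards [hcoeff, hbd] with z hz hz0
    have htop : (b d).eval z * G (z ^ k ^ d) = -∑ j ∈ range d, (b j).eval z * G (z ^ k ^ j) :=
      eq_neg_of_add_eq_zero_right (by rw [← sum_range_succ]; exact h z)
    refine le_of_mul_le_mul_left ?_ (norm_pos_iff.2 hz0)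
    calc ‖(b d).eval z‖ * ‖G (z ^ k ^ d)‖
        = ‖∑ j ∈ range d, (b j).eval z * G (z ^ k ^ j)‖ := by rw [← norm_mul, htop, norm_neg]
      _ ≤ ∑ j ∈ range d, ‖z‖ ^ D * ‖(b d).eval z‖ * ‖G (z ^ k ^ j)‖ := by
        refine (norm_sum_le _ _).trans (sum_le_sum fun j hj ↦ ?_)
        rw [norm_mul]
        gcongr
        exact hz j hj
      _ = ‖(b d).eval z‖ * (‖z‖ ^ D * ∑ j ∈ range d, ‖G (z ^ k ^ j)‖) := by
        rw [mul_sum, mul_sum]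
        exact sum_congr rfl fun j _ ↦ by ring
  exact hG.exists_polynomial_of_norm_le hCM

end MahlerSum

section Meromorphic

variable {𝕜 : Type*} [NontriviallyNormedField 𝕜]

theorem Polynomial.le_meromorphicOrderAt_eval_of_pow_dvd {Q : 𝕜[X]} {x : 𝕜} {n : ℕ}
    (h : (X - C x) ^ n ∣ Q) : (n : WithTop ℤ) ≤ meromorphicOrderAt (fun z ↦ Q.eval z) x := by
  obtain ⟨R, rfl⟩ := h
  have hR : AnalyticAt 𝕜 (fun z ↦ R.eval z) x := AnalyticOnNhd.eval_polynomial R x trivial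
  simp only [eval_mul, eval_pow, eval_sub, eval_X, eval_C]
  rw [fun_meromorphicOrderAt_mul (by fun_prop) hR.meromorphicAt,
    fun_meromorphicOrderAt_pow_id_sub_const]
  exact le_add_of_nonneg_right hR.meromorphicOrderAt_nonneg

theorem MeromorphicOn.exists_polynomial_mul_meromorphicOrderAt_nonneg {f : 𝕜 → 𝕜}
    (hf : MeromorphicOn f Set.univ) (hpoles : {x | meromorphicOrderAt f x < 0}.Finite) :
    ∃ Q : 𝕜[X], Q ≠ 0 ∧ ∀ x, 0 ≤ meromorphicOrderAt (fun z ↦ Q.eval z * f z) x := by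
  classical
  set n : 𝕜 → ℕ := fun x ↦ (-(meromorphicOrderAt f x).untop₀).toNat
  set Q := ∏ y ∈ hpoles.toFinset, (X - C y) ^ n y
  refine ⟨Q, prod_ne_zero_iff.2 fun y _ ↦ pow_ne_zero _ (X_sub_C_ne_zero y), fun x ↦ ?_⟩
  have hQ : AnalyticAt 𝕜 (fun z ↦ Q.eval z) x := AnalyticOnNhd.eval_polynomial Q x trivial
  rw [fun_meromorphicOrderAt_mul hQ.meromorphicAt (hf x trivial)]
  rcases le_or_gt 0 (meromorphicOrderAt f x) with hx | hx
  · exact add_nonneg hQ.meromorphicOrderAt_nonneg hx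
  have hQx : (n x : WithTop ℤ) ≤ meromorphicOrderAt (fun z ↦ Q.eval z) x :=
    le_meromorphicOrderAt_eval_of_pow_dvd (dvd_prod_of_mem _ (hpoles.mem_toFinset.2 hx))
  obtain ⟨m, hm⟩ := WithTop.ne_top_iff_exists.1 hx.ne_top
  have hm0 : m < 0 := by simpa [← hm] using hx
  have hnx : (n x : ℤ) = -m := by simp [n, ← hm]; omega
  calc (0 : WithTop ℤ) = ((n x : ℤ) + m : ℤ) := by rw [hnx, neg_add_cancel]; rfl
    _ ≤ _ := by rw [← hm]; exact add_le_add_left hQx _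

variable {E : Type*} [NormedAddCommGroup E] [NormedSpace 𝕜 E] {f : 𝕜 → E} {U : Set 𝕜}

theorem MeromorphicOn.analyticOnNhd_toMeromorphicNFOn (hf : MeromorphicOn f U)
    (h : ∀ x ∈ U, 0 ≤ meromorphicOrderAt f x) : AnalyticOnNhd 𝕜 (toMeromorphicNFOn f U) U :=
  fun x hx ↦ ((meromorphicNFOn_toMeromorphicNFOn f U) hx).meromorphicOrderAt_nonneg_iff_analyticAt.1
    (by rw [meromorphicOrderAt_toMeromorphicNFOn hf hx]; exact h x hx)

theorem toMeromorphicNFOn_apply_of_analyticAt (hf : MeromorphicOn f U) {x : 𝕜} (hx : x ∈ U)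
    (h : AnalyticAt 𝕜 f x) : toMeromorphicNFOn f U x = f x := by
  rw [toMeromorphicNFOn_eq_toMeromorphicNFAt hf hx, toMeromorphicNFAt_eq_self.2 h.meromorphicNFAt]

theorem MeromorphicOn.exists_polynomial_analyticOnNhd_eq_mul {f : 𝕜 → 𝕜}
    (hf : MeromorphicOn f Set.univ) (hpoles : {x | meromorphicOrderAt f x < 0}.Finite) :
    ∃ Q : 𝕜[X], Q ≠ 0 ∧ ∃ G : 𝕜 → 𝕜, AnalyticOnNhd 𝕜 G Set.univ ∧
      ∀ z, AnalyticAt 𝕜 f z → G z = Q.eval z * f z := by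
  obtain ⟨Q, hQ, hord⟩ := hf.exists_polynomial_mul_meromorphicOrderAt_nonneg hpoles
  have hQan := AnalyticOnNhd.eval_polynomial (𝕜 := 𝕜) Q
  have hQf : MeromorphicOn (fun z ↦ Q.eval z * f z) Set.univ :=
    fun x _ ↦ (hQan x trivial).meromorphicAt.mul (hf x trivial)
  exact ⟨Q, hQ, _, hQf.analyticOnNhd_toMeromorphicNFOn fun x _ ↦ hord x,
    fun z hz ↦ toMeromorphicNFOn_apply_of_analyticAt hQf trivial ((hQan z trivial).mul hz)⟩

end Meromorphic

/-- A `k`-Mahler function which is meromorphic on all of ℂ with only finitely many poles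
is a rational function. Here `f : ℂ → ℂ` is analytic at `0`, satisfies the Mahler
functional equation on a neighbourhood of `0`, and is meromorphic on ℂ with finite
pole set; the conclusion is that `f` agrees with a rational function `P/Q` wherever
it is analytic. -/
theorem kMahler_meromorphic_is_rational
    (k : ℕ) (hk : 2 ≤ k) (d : ℕ) (a : ℕ → Polynomial ℂ) (ha : a 0 * a d ≠ 0)
    (f : ℂ → ℂ) (hf0 : AnalyticAt ℂ f 0)
    (heq : ∃ r : ℝ, 0 < r ∧ ∀ z ∈ ball (0 : ℂ) r,
      ∑ j ∈ Finset.range (d + 1), (a j).eval z * f (z ^ k ^ j) = 0)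
    (hmero : MeromorphicOn f Set.univ)
    (hpoles : {x : ℂ | Tendsto (fun z => ‖f z‖) (nhdsWithin x {x}ᶜ) atTop}.Finite) :
    ∃ P Q : Polynomial ℂ, Q ≠ 0 ∧ ∀ z : ℂ, AnalyticAt ℂ f z →
      f z * Q.eval z = P.eval z := by
  obtain ⟨r, hr, hfeq⟩ := heq
  obtain ⟨Q, hQ, G, hG, hGf⟩ := hmero.exists_polynomial_analyticOnNhd_eq_mul <|
    hpoles.subset fun x hx ↦
      tendsto_norm_atTop_iff_cobounded.2 (tendsto_cobounded_of_meromorphicOrderAt_neg hx)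
  have hGd : Differentiable ℂ G := fun z ↦ (hG z trivial).differentiableAt
  set b : ℕ → ℂ[X] := fun j ↦ a j * ∏ i ∈ (range (d + 1)).erase j, expand ℂ (k ^ i) Q
  have hb : b d ≠ 0 := mul_ne_zero (right_ne_zero_of_mul ha)
    (prod_ne_zero_iff.2 fun i _ ↦ (expand_ne_zero (by positivity)).2 hQ)
  have hnear : mahlerSum k d b G =ᶠ[𝓝 0] 0 :=
    eventuallyEq_zero_mahlerSum_polynomial_mul (by omega) hf0 hGf
      (eventually_of_mem (ball_mem_nhds 0 hr) hfeq)
  have hall : ∀ z, mahlerSum k d b G z = 0 := fun z ↦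
    AnalyticOnNhd.eqOn_zero_of_preconnected_of_eventuallyEq_zero
      (fun w _ ↦ (differentiable_mahlerSum hGd k d b).analyticAt w) isPreconnected_univ
      (Set.mem_univ 0) hnear (Set.mem_univ z)
  obtain ⟨p, hp⟩ := hGd.exists_polynomial_of_mahlerSum_eq_zero hk hb hall
  exact ⟨p, Q, hQ, fun z hz ↦ by rw [← hp, hGf z hz, mul_comm]⟩
end

section
/- Every power series F(z) ∈ ℂ[[z]] that is algebraic over ℂ(z) is D-finite: it satisfies a nontrivial homogeneous linear differential equation with polynomial coefficients. -/
open PowerSeries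

/-- `F` is algebraic over ℂ(z): `Σ_{i=0}^n c_i(z) F(z)^i = 0` with the `c_i`
polynomials, not all zero. -/
def IsAlgebraicPS (F : PowerSeries ℂ) : Prop :=
  ∃ (n : ℕ) (c : ℕ → Polynomial ℂ), (∃ i ≤ n, c i ≠ 0) ∧
    ∑ i ∈ Finset.range (n + 1), (c i : PowerSeries ℂ) * F ^ i = 0

/-- `F` is D-finite: it satisfies a nontrivial homogeneous linear differential
equation with polynomial coefficients (formal derivatives). -/
def IsDFinite (F : PowerSeries ℂ) : Prop :=
  ∃ (m : ℕ) (p : ℕ → Polynomial ℂ), (∃ i ≤ m, p i ≠ 0) ∧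
    ∑ i ∈ Finset.range (m + 1),
      (p i : PowerSeries ℂ) * (fun G => PowerSeries.derivativeFun G)^[i] F = 0

/-!
Let `P(z, y)` be an annihilating polynomial of `F` of minimal degree in `y`; in characteristic
zero `P_y(z, F) ≠ 0`. Differentiating `P(z, F) = 0` gives `F' = -P_z(z, F) / P_y(z, F)`, so by
the chain and quotient rules the field `ℂ(z, F)` is closed under `d/dz` and contains every
derivative of `F`. Since `F` is algebraic, `ℂ(z, F)` (realised inside the Laurent series) is
finite-dimensional over `ℂ(z)`, so `F, F', F'', …` are linearly dependent over `ℂ(z)`, hence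
over `ℂ[z]`.
-/

open Polynomial

section

variable {R : Type*} [CommRing R]

theorem algebraMap_polynomial_eq_coe (p : R[X]) : algebraMap R[X] R⟦X⟧ p = p := by
  rw [PowerSeries.algebraMap_apply']; simp

theorem derivative_algebraMap_polynomial (p : R[X]) :
    d⁄dX R (algebraMap R[X] R⟦X⟧ p) = algebraMap R[X] R⟦X⟧ (derivative p) := by
  rw [algebraMap_polynomial_eq_coe, algebraMap_polynomial_eq_coe, PowerSeries.derivative_coe]

/-- Chain rule; `H` is `G` with its coefficients differentiated. -/
theorem exists_derivative_aeval (F : R⟦X⟧) (G : R[X][X]) :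
    ∃ H : R[X][X], d⁄dX R (aeval F G) = aeval F H + aeval F (derivative G) * d⁄dX R F := by
  induction G using Polynomial.induction_on' with
  | add G₁ G₂ h₁ h₂ =>
    obtain ⟨H₁, e₁⟩ := h₁
    obtain ⟨H₂, e₂⟩ := h₂
    exact ⟨H₁ + H₂, by simp only [map_add, e₁, e₂]; ring⟩
  | monomial n c =>
    refine ⟨monomial n (derivative c), ?_⟩
    simp only [aeval_monomial, derivative_monomial, Derivation.leibniz, Derivation.leibniz_pow,
      derivative_algebraMap_polynomial, map_mul, map_natCast, smul_eq_mul, nsmul_eq_mul]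
    ring

/-- `G` lies in the subfield of `Frac R⟦X⟧` generated by `R[X]` and `F`. -/
def IsRationalIn (F G : R⟦X⟧) : Prop :=
  ∃ S T : R[X][X], aeval F S ≠ 0 ∧ aeval F S * G = aeval F T

theorem isRationalIn_self [Nontrivial R] (F : R⟦X⟧) : IsRationalIn F F :=
  ⟨1, X, by simp, by simp⟩

/-- Differentiating `P(F) = 0` gives `P_y(F) F' = -P_z(F)`, so the factor `P_y(F)` clears `F'` from
the chain rule. -/
theorem exists_mul_derivative_aeval_eq_aeval {F : R⟦X⟧} {P : R[X][X]} (hP : aeval F P = 0)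
    (G : R[X][X]) :
    ∃ H : R[X][X], aeval F (derivative P) * d⁄dX R (aeval F G) = aeval F H := by
  obtain ⟨HP, hHP⟩ := exists_derivative_aeval F P
  obtain ⟨HG, hHG⟩ := exists_derivative_aeval F G
  rw [hP, map_zero] at hHP
  refine ⟨derivative P * HG - derivative G * HP, ?_⟩
  rw [hHG, map_sub, map_mul, map_mul]
  linear_combination -aeval F (derivative G) * hHP

theorem IsRationalIn.derivative [IsDomain R] {F G : R⟦X⟧} {P : R[X][X]} (hP : aeval F P = 0)
    (hP' : aeval F (derivative P) ≠ 0) (hG : IsRationalIn F G) : IsRationalIn F (d⁄dX R G) := by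
  obtain ⟨S, T, hS, hST⟩ := hG
  obtain ⟨S', hS'⟩ := exists_mul_derivative_aeval_eq_aeval hP S
  obtain ⟨T', hT'⟩ := exists_mul_derivative_aeval_eq_aeval hP T
  refine ⟨S ^ 2 * P.derivative, S * T' - S' * T, by simp [hS, hP'], ?_⟩
  have hD := congrArg (d⁄dX R) hST
  rw [Derivation.leibniz, smul_eq_mul, smul_eq_mul] at hD
  simp only [map_mul, map_pow, map_sub]
  linear_combination aeval F S * aeval F P.derivative * hD + aeval F S * hT'
    - aeval F P.derivative * d⁄dX R (aeval F S) * hST - aeval F T * hS'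

theorem isRationalIn_iterate_derivative [IsDomain R] {F : R⟦X⟧} {P : R[X][X]}
    (hP : aeval F P = 0) (hP' : aeval F (derivative P) ≠ 0) (n : ℕ) :
    IsRationalIn F ((d⁄dX R)^[n] F) := by
  induction n with
  | zero => exact isRationalIn_self F
  | succ n ih =>
    rw [Function.iterate_succ_apply']
    exact ih.derivative hP hP'

end

theorem IsAlgebraic.exists_aeval_derivative_ne_zero {R A : Type*} [CommRing R]
    [IsAddTorsionFree R] [CommRing A] [Algebra R A] (hinj : Function.Injective (algebraMap R A))
    {x : A} (hx : IsAlgebraic R x) :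
    ∃ P : R[X], aeval x P = 0 ∧ aeval x (derivative P) ≠ 0 := by
  obtain ⟨P, hP0, hPx⟩ := hx
  induction hn : P.natDegree using Nat.strong_induction_on generalizing P with
  | _ n ih =>
    by_cases hP' : aeval x (derivative P) = 0
    · have hdeg : P.natDegree ≠ 0 := by
        intro h0
        rw [eq_C_of_natDegree_eq_zero h0, aeval_C, map_eq_zero_iff _ hinj] at hPx
        exact hP0 (by rw [eq_C_of_natDegree_eq_zero h0, hPx, C_0])
      exact ih _ (hn ▸ natDegree_derivative_lt hdeg) _ (mt derivative_eq_zero.mp hdeg) hP' rfl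
    · exact ⟨P, hPx, hP'⟩

section LaurentSeries

variable {k : Type*} [Field k]

attribute [local instance] RatFunc.liftAlgebra

instance : IsScalarTower k[X] k⟦X⟧ (LaurentSeries k) := IsScalarTower.of_algebraMap_eq' rfl

theorem IsRationalIn.algebraMap_mem_adjoin {F G : k⟦X⟧} (hG : IsRationalIn F G) :
    algebraMap k⟦X⟧ (LaurentSeries k) G ∈
      IntermediateField.adjoin (RatFunc k) {algebraMap k⟦X⟧ (LaurentSeries k) F} := by
  obtain ⟨S, T, hS, hST⟩ := hG
  have hmem (U : k[X][X]) : algebraMap k⟦X⟧ (LaurentSeries k) (aeval F U) ∈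
      IntermediateField.adjoin (RatFunc k) {algebraMap k⟦X⟧ (LaurentSeries k) F} := by
    rw [← aeval_algebraMap_apply, ← aeval_map_algebraMap (RatFunc k)]
    exact IntermediateField.algebra_adjoin_le_adjoin (RatFunc k) _
      (aeval_mem_adjoin_singleton (RatFunc k) _)
  have hS' : algebraMap k⟦X⟧ (LaurentSeries k) (aeval F S) ≠ 0 :=
    (map_ne_zero_iff _ HahnSeries.ofPowerSeries_injective).mpr hS
  have hG : algebraMap k⟦X⟧ (LaurentSeries k) G =
      (algebraMap k⟦X⟧ (LaurentSeries k) (aeval F S))⁻¹ *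
        algebraMap k⟦X⟧ (LaurentSeries k) (aeval F T) :=
    (eq_inv_mul_iff_mul_eq₀ hS').mpr (by rw [← map_mul, hST])
  rw [hG]
  exact mul_mem (inv_mem (hmem S)) (hmem T)

theorem not_linearIndependent_iterate_derivative [CharZero k] {F : k⟦X⟧}
    (hF : IsAlgebraic k[X] F) : ¬LinearIndependent k[X] fun n => (d⁄dX k)^[n] F := by
  obtain ⟨P, hP, hP'⟩ := hF.exists_aeval_derivative_ne_zero fun p q h =>
    Polynomial.coe_injective k (by simpa only [algebraMap_polynomial_eq_coe] using h)
  set L := IntermediateField.adjoin (RatFunc k) {algebraMap k⟦X⟧ (LaurentSeries k) F}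
  have : FiniteDimensional (RatFunc k) L := IntermediateField.adjoin.finiteDimensional
    (hF.algebraMap.extendScalars (IsFractionRing.injective k[X] (RatFunc k))).isIntegral
  have hmem (n : ℕ) : algebraMap k⟦X⟧ (LaurentSeries k) ((d⁄dX k)^[n] F) ∈ L :=
    (isRationalIn_iterate_derivative hP hP' n).algebraMap_mem_adjoin
  intro hli
  apply Module.Finite.not_linearIndependent_of_infinite (R := RatFunc k)
    fun n => (⟨_, hmem n⟩ : L)
  apply LinearIndependent.of_comp L.val.toLinearMap
  rw [← LinearIndependent.iff_fractionRing k[X] (RatFunc k)]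
  exact hli.map' (IsScalarTower.toAlgHom k[X] k⟦X⟧ (LaurentSeries k)).toLinearMap
    (LinearMap.ker_eq_bot.mpr HahnSeries.ofPowerSeries_injective)

end LaurentSeries

theorem isAlgebraic_of_isAlgebraicPS {F : ℂ⟦X⟧} (h : IsAlgebraicPS F) :
    IsAlgebraic ℂ[X] F := by
  obtain ⟨n, c, ⟨i, hin, hci⟩, hsum⟩ := h
  refine ⟨∑ j ∈ Finset.range (n + 1), monomial j (c j), fun h0 => hci ?_, ?_⟩
  · simpa [finsetSum_coeff, Polynomial.coeff_monomial, Nat.lt_succ_of_le hin] using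
      congrArg (·.coeff i) h0
  · simpa [aeval_monomial, algebraMap_polynomial_eq_coe] using hsum

theorem isDFinite_of_not_linearIndependent {F : ℂ⟦X⟧}
    (h : ¬LinearIndependent ℂ[X] fun n => (d⁄dX ℂ)^[n] F) : IsDFinite F := by
  obtain ⟨s, g, hsum, i, his, hgi⟩ := not_linearIndependent_iff.mp h
  have hs : s ⊆ Finset.range (s.sup id + 1) := fun j hj =>
    Finset.mem_range_succ_iff.mpr (Finset.le_sup (f := id) hj)
  refine ⟨s.sup id, fun j => if j ∈ s then g j else 0,
    ⟨i, Finset.le_sup (f := id) his, by simpa [his]⟩, ?_⟩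
  rw [← Finset.sum_subset hs]
  · rw [← hsum]
    refine Finset.sum_congr rfl fun j hj => ?_
    simp only [if_pos hj, Algebra.smul_def, algebraMap_polynomial_eq_coe]
    rfl
  · intro j _ hj
    simp only [if_neg hj, Polynomial.coe_zero, zero_mul]

/-- Every power series algebraic over ℂ(z) is D-finite. -/
theorem algebraic_is_dfinite (F : PowerSeries ℂ) (halg : IsAlgebraicPS F) :
    IsDFinite F :=
  isDFinite_of_not_linearIndependent
    (not_linearIndependent_iterate_derivative (isAlgebraic_of_isAlgebraicPS halg))
end

section
/- Let F be an entire function and k ≥ 2, L > 1, C > 1, N > 1 constants such that the maxima M_ℓ = max{|F(z)| : |z| = L^{k^ℓ}} satisfy M_n ≤ C·d·L^{N k^n} M_{n-1} for all n ≥ d. Then there exists b > 0 such that M_n ≤ L^{b k^n} for all n ≥ d. -/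
/-!
Write `C·d = L^c`. If `M_n ≤ L^{b k^n}`, the recurrence gives `M_{n+1} ≤ L^{c + N k^{n+1} + b k^n}`,
and since `k ≤ 2(k - 1)` for `k ≥ 2`, this exponent is at most `b k^{n+1}` once `b ≥ 2N + c`.
Enlarging `b` so that it also covers `M_d` starts the induction.
-/

open Real

lemma add_mul_pow_succ_add_mul_pow_le {k N c b : ℝ} (hk : 2 ≤ k) (hN : 0 ≤ N) (hc : 0 ≤ c)
    (hb : 2 * N + c ≤ b) (n : ℕ) : c + N * k ^ (n + 1) + b * k ^ n ≤ b * k ^ (n + 1) := by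
  have hk1 : 0 ≤ k - 1 := by linarith
  have hx : 1 ≤ k ^ n := one_le_pow₀ (by linarith)
  have hc' : c ≤ c * ((k - 1) * k ^ n) := le_mul_of_one_le_right hc (by nlinarith)
  have hN' : N * k * k ^ n ≤ 2 * N * (k - 1) * k ^ n :=
    mul_le_mul_of_nonneg_right (by nlinarith) (by positivity)
  have hb' : (2 * N + c) * (k - 1) * k ^ n ≤ b * (k - 1) * k ^ n := by gcongr
  rw [pow_succ]
  linarith

section GrowthRecurrence

variable {a : ℕ → ℝ} {L k A N : ℝ} {d : ℕ}

lemma le_rpow_mul_pow_of_le_mul_rpow (hL : 1 < L) (hk : 2 ≤ k) (hA : 1 ≤ A) (hN : 0 ≤ N)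
    (hrec : ∀ n, d < n → a n ≤ A * L ^ (N * k ^ n) * a (n - 1)) {b : ℝ}
    (hb : 2 * N + logb L A ≤ b) (hd : a d ≤ L ^ (b * k ^ d)) :
    ∀ n, d ≤ n → a n ≤ L ^ (b * k ^ n) := by
  have hL0 : 0 < L := by linarith
  intro n hn
  induction n, hn using Nat.le_induction with
  | base => exact hd
  | succ n _ ih =>
    calc a (n + 1) ≤ A * L ^ (N * k ^ (n + 1)) * a n := hrec (n + 1) (by omega)
      _ ≤ L ^ logb L A * L ^ (N * k ^ (n + 1)) * L ^ (b * k ^ n) := by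
        rw [rpow_logb hL0 hL.ne' (by linarith)]
        gcongr
      _ = L ^ (logb L A + N * k ^ (n + 1) + b * k ^ n) := by rw [rpow_add hL0, rpow_add hL0]
      _ ≤ L ^ (b * k ^ (n + 1)) :=
        rpow_le_rpow_of_exponent_le hL.le
          (add_mul_pow_succ_add_mul_pow_le hk hN (logb_nonneg hL hA) hb n)

theorem exists_pos_le_rpow_mul_pow_of_le_mul_rpow (hL : 1 < L) (hk : 2 ≤ k) (hA : 1 ≤ A)
    (hN : 0 ≤ N) (hrec : ∀ n, d < n → a n ≤ A * L ^ (N * k ^ n) * a (n - 1)) :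
    ∃ b, 0 < b ∧ ∀ n, d ≤ n → a n ≤ L ^ (b * k ^ n) := by
  set e := logb L (max (a d) 1)
  have he : 0 ≤ e := logb_nonneg hL (le_max_right _ _)
  have hc : 0 ≤ logb L A := logb_nonneg hL hA
  set b := 2 * N + logb L A + e + 1
  have hd : a d ≤ L ^ (b * k ^ d) :=
    calc a d ≤ max (a d) 1 := le_max_left _ _
      _ = L ^ e := (rpow_logb (by linarith) hL.ne' (by positivity)).symm
      _ ≤ L ^ (b * k ^ d) := rpow_le_rpow_of_exponent_le hL.le <| by
        nlinarith [one_le_pow₀ (n := d) (by linarith : 1 ≤ k)]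
  exact ⟨b, by positivity, le_rpow_mul_pow_of_le_mul_rpow hL hk hA hN hrec (by linarith) hd⟩

end GrowthRecurrence

theorem mahler_growth_bound_general
    (k : ℕ) (hk : 2 ≤ k) (d : ℕ) (hd : 1 ≤ d)
    (L C N : ℝ) (hL : 1 < L) (hC : 1 < C) (hN : 1 < N)
    (M : ℕ → ℝ)
    (hrec : ∀ n : ℕ, d ≤ n → M n ≤ C * d * L ^ (N * (k : ℝ) ^ n) * M (n - 1)) :
    ∃ b : ℝ, 0 < b ∧ ∀ n : ℕ, d ≤ n → M n ≤ L ^ (b * (k : ℝ) ^ n) := by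
  have hCd : 1 ≤ C * d := one_le_mul_of_one_le_of_one_le hC.le (by exact_mod_cast hd)
  exact exists_pos_le_rpow_mul_pow_of_le_mul_rpow hL (by exact_mod_cast hk) hCd (by linarith)
    fun n hn => hrec n hn.le

/-- If the maximum moduli `M ℓ` of an entire function `F` on the circles of radius
`L^{k^ℓ}` satisfy `M n ≤ C·d·L^{N k^n}·M (n-1)` for all `n ≥ d`, then there is a
`b > 0` with `M n ≤ L^{b k^n}` for all `n ≥ d`. -/
theorem mahler_growth_bound
    (F : ℂ → ℂ) (hF : Differentiable ℂ F)
    (k : ℕ) (hk : 2 ≤ k) (d : ℕ) (hd : 1 ≤ d)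
    (L C N : ℝ) (hL : 1 < L) (hC : 1 < C) (hN : 1 < N)
    (M : ℕ → ℝ)
    (hM : ∀ ℓ : ℕ, IsGreatest {y : ℝ | ∃ z : ℂ, ‖z‖ = L ^ (k ^ ℓ) ∧ y = ‖F z‖} (M ℓ))
    (hrec : ∀ n : ℕ, d ≤ n → M n ≤ C * d * L ^ (N * (k : ℝ) ^ n) * M (n - 1)) :
    ∃ b : ℝ, 0 < b ∧ ∀ n : ℕ, d ≤ n → M n ≤ L ^ (b * (k : ℝ) ^ n) :=
  mahler_growth_bound_general k hk d hd L C N hL hC hN M hrec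
end

section
/- Let F be an entire function, k ≥ 2, L > 1, b > 0, and suppose max{|F(z)| : |z| = L^{k^n}} ≤ L^{b k^n} for all sufficiently large n. Then F is a polynomial of degree at most b + 1. -/
/-!
Writing `R = L^{k^n}`, the hypothesis says `‖F‖ ≤ R^b` on circles whose radii `R` tend to
infinity. Cauchy's estimate on such a circle bounds the `m`-th derivative at `0` by
`m! R^{b-m}`, which tends to `0` for `m > b`; so the Taylor series of `F` at `0` stops at
degree `⌊b⌋`.
-/

open Filter Metric Polynomial Topology
open scoped Nat

namespace Complex

theorem iteratedDeriv_eq_zero_of_frequently_norm_le_rpow {E : Type*} [NormedAddCommGroup E]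
    [NormedSpace ℂ E] [CompleteSpace E] {F : ℂ → E} (hF : Differentiable ℂ F) {c : ℂ}
    {b : ℝ} (hbound : ∃ᶠ R in atTop, ∀ z ∈ sphere c R, ‖F z‖ ≤ R ^ b) {m : ℕ} (hm : b < m) :
    iteratedDeriv m F c = 0 := by
  have hlim : Tendsto (fun R : ℝ => m ! * R ^ (b - m)) atTop (𝓝 0) := by
    simpa using (tendsto_rpow_neg_atTop (sub_pos.mpr hm)).const_mul (m ! : ℝ)
  refine norm_le_zero_iff.mp <| ge_of_tendsto_of_frequently hlim ?_
  refine (hbound.and_eventually (eventually_gt_atTop 0)).mono fun R ⟨hR, hRpos⟩ => ?_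
  calc ‖iteratedDeriv m F c‖ ≤ m ! * R ^ b / R ^ m :=
        norm_iteratedDeriv_le_of_forall_mem_sphere_norm_le m hRpos hF.diffContOnCl hR
    _ = m ! * R ^ (b - m) := by
        rw [Real.rpow_sub hRpos, Real.rpow_natCast, mul_div_assoc]

theorem exists_polynomial_of_iteratedDeriv_eq_zero {F : ℂ → ℂ} (hF : Differentiable ℂ F)
    {d : ℕ} (hd : ∀ m, d < m → iteratedDeriv m F 0 = 0) :
    ∃ P : ℂ[X], P.natDegree ≤ d ∧ ∀ z, F z = P.eval z := by
  refine ⟨∑ i ∈ Finset.range (d + 1), C ((i ! : ℂ)⁻¹ * iteratedDeriv i F 0) * X ^ i,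
    natDegree_sum_le_of_forall_le _ _ fun i hi => ?_, fun z => ?_⟩
  · exact (natDegree_C_mul_X_pow_le _ _).trans (Nat.lt_succ_iff.mp (Finset.mem_range.mp hi))
  · set taylorTerm : ℕ → ℂ := fun n => (n ! : ℂ)⁻¹ • (z - 0) ^ n • iteratedDeriv n F 0
    have hfinite : HasSum taylorTerm (∑ n ∈ Finset.range (d + 1), taylorTerm n) :=
      hasSum_sum_of_ne_finset_zero fun i hi => by simp [taylorTerm, hd i (by simpa using hi)]
    rw [(hasSum_taylorSeries_of_entire hF 0 z).unique hfinite]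
    simp [taylorTerm, eval_finsetSum, mul_comm, mul_left_comm]

theorem exists_polynomial_of_frequently_norm_le_rpow {F : ℂ → ℂ} (hF : Differentiable ℂ F)
    {b : ℝ} (hbound : ∃ᶠ R in atTop, ∀ z ∈ sphere (0 : ℂ) R, ‖F z‖ ≤ R ^ b) :
    ∃ P : ℂ[X], P.natDegree ≤ ⌊b⌋₊ ∧ ∀ z, F z = P.eval z :=
  exists_polynomial_of_iteratedDeriv_eq_zero hF fun m hm =>
    iteratedDeriv_eq_zero_of_frequently_norm_le_rpow hF hbound
      ((Nat.lt_floor_add_one b).trans_le (by exact_mod_cast hm))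

end Complex

/-- If an entire function `F` satisfies `|F| ≤ L^{b k^n}` on the circle of radius
`L^{k^n}` for all sufficiently large `n`, then `F` is a polynomial of degree at most
`b + 1`. -/
theorem entire_growth_polynomial
    (F : ℂ → ℂ) (hF : Differentiable ℂ F)
    (k : ℕ) (hk : 2 ≤ k) (L b : ℝ) (hL : 1 < L) (hb : 0 < b)
    (hbound : ∃ N₀ : ℕ, ∀ n : ℕ, N₀ ≤ n → ∀ z : ℂ,
      ‖z‖ = L ^ ((k : ℝ) ^ n) → ‖F z‖ ≤ L ^ (b * (k : ℝ) ^ n)) :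
    ∃ P : Polynomial ℂ, (P.natDegree : ℝ) ≤ b + 1 ∧ ∀ z : ℂ, F z = P.eval z := by
  obtain ⟨N₀, hN₀⟩ := hbound
  have hradius : Tendsto (fun n : ℕ => L ^ ((k : ℝ) ^ n)) atTop atTop :=
    (tendsto_rpow_atTop_of_base_gt_one L hL).comp
      (tendsto_pow_atTop_atTop_of_one_lt (by exact_mod_cast hk))
  have hsphere : ∀ᶠ n in atTop, ∀ z ∈ sphere (0 : ℂ) (L ^ ((k : ℝ) ^ n)),
      ‖F z‖ ≤ (L ^ ((k : ℝ) ^ n)) ^ b := by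
    filter_upwards [eventually_ge_atTop N₀] with n hn z hz
    rw [← Real.rpow_mul (zero_le_one.trans hL.le), mul_comm]
    exact hN₀ n hn z (mem_sphere_zero_iff_norm.mp hz)
  obtain ⟨P, hdeg, hP⟩ := Complex.exists_polynomial_of_frequently_norm_le_rpow hF
    (hradius.frequently hsphere.frequently)
  refine ⟨P, ?_, hP⟩
  calc (P.natDegree : ℝ) ≤ ⌊b⌋₊ := by exact_mod_cast hdeg
    _ ≤ b + 1 := by linarith [Nat.floor_le hb.le]
end
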